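/- arXiv:1804.08115 — 3 statements merged into one kernel-verified Lean document; each statement's English description precedes it below -/
import Mathlib

section
/- Let k be a field of characteristic p > 0, let k' be a purely inseparable field extension of k, and let l be a finite separable field extension of k. Then the tensor product k' ⊗_k l is a field. -/
/-!
Embed `l` into an algebraic closure `K` of `k'`. A separable subextension of `K / k` is linearly
disjoint from the purely inseparable `k'`, so `k' ⊗[k] l` is a domain; a tensor product of two
fields, one of them algebraic, that is a domain is a field (it is the compositum of the two images
in `K`).
-/

open scoped TensorProduct

theorem Algebra.TensorProduct.isField_of_linearDisjoint_fieldRange {k k' l K : Type*} [Field k]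
    [Field k'] [Field l] [Field K] [Algebra k k'] [Algebra k l] [Algebra k K] [Algebra k' K]
    [IsScalarTower k k' K] (ι : l →ₐ[k] K) (H : ι.fieldRange.LinearDisjoint k')
    (halg : Algebra.IsAlgebraic k ι.fieldRange ∨ Algebra.IsAlgebraic k k') :
    IsField (k' ⊗[k] l) :=
  ((Algebra.TensorProduct.comm k k' l).trans
    (Algebra.TensorProduct.congr (AlgEquiv.ofInjectiveField ι) AlgEquiv.refl)).toMulEquiv.isField
    (H.isField_of_isAlgebraic halg)

theorem purelyInseparable_tensor_finite_separable_isField_general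
    (k k' l : Type*) [Field k] [Field k'] [Field l]
    [Algebra k k'] [Algebra k l]
    [IsPurelyInseparable k k']
    [Algebra.IsSeparable k l] :
    IsField (k' ⊗[k] l) := by
  let ι : l →ₐ[k] AlgebraicClosure k' := IsAlgClosed.lift
  have : Algebra.IsSeparable k ι.fieldRange :=
    AlgEquiv.Algebra.isSeparable (AlgEquiv.ofInjectiveField ι)
  exact Algebra.TensorProduct.isField_of_linearDisjoint_fieldRange ι
    (ι.fieldRange.linearDisjoint_of_isPurelyInseparable_of_isSeparable k') (.inr inferInstance)

/-- Let `k` be a field of characteristic `p > 0`, let `k'` be a purely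
inseparable field extension of `k`, and let `l` be a finite separable field extension of `k`.
Then the tensor product `k' ⊗[k] l` is a field. -/
theorem purelyInseparable_tensor_finite_separable_isField
    (p : ℕ) [Fact p.Prime] (k k' l : Type*) [Field k] [Field k'] [Field l]
    [Algebra k k'] [Algebra k l] [CharP k p]
    [IsPurelyInseparable k k']
    [FiniteDimensional k l] [Algebra.IsSeparable k l] :
    IsField (k' ⊗[k] l) :=
  purelyInseparable_tensor_finite_separable_isField_general k k' l
end

section
/- Let k be a field of characteristic p > 0 and k' a purely inseparable field extension of k. Then the base-change functor A ↦ A ⊗_k k' from the category of finite étale k-algebras to the category of finite étale k'-algebras is an equivalence of categories. -/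
/-!
Let `p` be the exponential characteristic. Every element of `k' ⊗[k] B` has a `p ^ n`-th power
in `B`, and an element `x` annihilated by a separable polynomial over `k` is a polynomial over `k`
in `x ^ p ^ n` (for an irreducible factor this is `k⟮x⟯ = k⟮x ^ p ^ n⟯`; the factors are glued by
the Chinese remainder theorem). Hence a `k`-algebra map from an étale `k`-algebra into
`k' ⊗[k] B` lands in `B`, which makes base change fully faithful. For essential surjectivity, a
finite étale `k'`-algebra is a product of finite separable extensions `L / k'`, and
`L = k' ⊗[k] S` for the separable closure `S` of `k` in `L`: `S` and `k'` are linearly disjoint,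
and they generate `L` because `L` is purely inseparable over `S` and separable over `k'`.
-/

open scoped TensorProduct

open CategoryTheory

universe u

/-- The category of finite étale algebras over a field `k`: objects are commutative
`k`-algebras that are finite as `k`-modules and étale over `k`; morphisms are `k`-algebra
homomorphisms. -/
structure FiniteEtaleAlg (k : Type u) [Field k] : Type (u + 1) where
  carrier : Type u
  [isCommRing : CommRing carrier]
  [isAlgebra : Algebra k carrier]
  [isFinite : Module.Finite k carrier]
  [isEtale : Algebra.Etale k carrier]

attribute [instance] FiniteEtaleAlg.isCommRing FiniteEtaleAlg.isAlgebra
  FiniteEtaleAlg.isFinite FiniteEtaleAlg.isEtale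

instance (k : Type u) [Field k] : Category (FiniteEtaleAlg k) where
  Hom A B := A.carrier →ₐ[k] B.carrier
  id A := AlgHom.id k A.carrier
  comp f g := g.comp f
  id_comp f := AlgHom.comp_id f
  comp_id f := AlgHom.id_comp f
  assoc f g h := (AlgHom.comp_assoc h g f).symm

/-- The base-change functor `A ↦ A ⊗_k k'` (realized as `k' ⊗[k] A`) from finite étale
`k`-algebras to finite étale `k'`-algebras. -/
noncomputable def baseChangeFunctor (k : Type u) [Field k] (k' : Type u) [Field k']
    [Algebra k k'] : FiniteEtaleAlg k ⥤ FiniteEtaleAlg k' where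
  obj A := { carrier := k' ⊗[k] A.carrier }
  map {A B} f := Algebra.TensorProduct.map (AlgHom.id k' k') f
  map_id A := Algebra.TensorProduct.map_id
  map_comp {A B C} f g := Algebra.TensorProduct.map_id_comp g f

open Polynomial IntermediateField Algebra.TensorProduct

section Frobenius

variable {k : Type*} [Field k] (p : ℕ) [ExpChar k p]

theorem IsSeparable.exists_aeval_pow_expChar_pow_eq {L : Type*} [Field L] [Algebra k L] {a : L}
    (ha : IsSeparable k a) (n : ℕ) : ∃ P : k[X], aeval (a ^ p ^ n) P = a := by
  have hmem : a ∈ k⟮a ^ p ^ n⟯ :=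
    adjoin_simple_eq_adjoin_pow_expChar_pow_of_isSeparable k L ha p n ▸ mem_adjoin_simple_self k a
  rw [← SetLike.mem_coe, ← coe_toSubalgebra,
    adjoin_simple_toSubalgebra_of_isAlgebraic ((ha.isIntegral.pow _).isAlgebraic),
    Algebra.adjoin_singleton_eq_range_aeval] at hmem
  exact hmem

theorem Irreducible.exists_dvd_expand_sub_X {g : k[X]} (hirr : Irreducible g)
    (hsep : g.Separable) (n : ℕ) : ∃ P : k[X], g ∣ expand k (p ^ n) P - X := by
  have : Fact (Irreducible g) := ⟨hirr⟩
  have hroot : IsSeparable k (AdjoinRoot.root g) :=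
    hsep.of_dvd (minpoly.dvd k _ (AdjoinRoot.aeval_eq g ▸ AdjoinRoot.mk_self))
  obtain ⟨P, hP⟩ := hroot.exists_aeval_pow_expChar_pow_eq p n
  refine ⟨P, AdjoinRoot.mk_eq_zero.mp ?_⟩
  rw [← AdjoinRoot.aeval_eq, map_sub, expand_aeval, aeval_X, hP, sub_self]

theorem IsCoprime.exists_dvd_expand_sub_X_mul {f g : k[X]} (hfg : IsCoprime f g)
    {n : ℕ} {P Q : k[X]} (hP : f ∣ expand k (p ^ n) P - X) (hQ : g ∣ expand k (p ^ n) Q - X) :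
    ∃ R : k[X], f * g ∣ expand k (p ^ n) R - X := by
  -- twisting by the `p ^ n`-th power Frobenius turns `expand` into raising to the `p ^ n`-th power
  have hexp (h : k[X]) : expand k (p ^ n) (h.map (iterateFrobenius k p n)) = h ^ p ^ n := by
    rw [← map_expand, map_iterateFrobenius_expand]
  obtain ⟨u, v, huv⟩ := hfg.map (mapRingHom (iterateFrobenius k p n))
  simp only [coe_mapRingHom] at huv
  set R := Q * u * f.map (iterateFrobenius k p n) + P * v * g.map (iterateFrobenius k p n)
  have hsplit : expand k (p ^ n) R - X =
      (expand k (p ^ n) Q - X) * (expand k (p ^ n) u * f ^ p ^ n) +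
        (expand k (p ^ n) P - X) * (expand k (p ^ n) v * g ^ p ^ n) := by
    have h1 := congrArg (expand k (p ^ n)) huv
    simp only [R, map_add, map_mul, map_one, hexp] at h1 ⊢
    linear_combination (X : k[X]) * h1
  have hpn : p ^ n ≠ 0 := pow_ne_zero n (expChar_pos k p).ne'
  refine ⟨R, hfg.mul_dvd ?_ ?_⟩ <;> rw [hsplit]
  · exact dvd_add (((dvd_pow_self f hpn).mul_left _).mul_left _) (hP.mul_right _)
  · exact dvd_add (hQ.mul_right _) (((dvd_pow_self g hpn).mul_left _).mul_left _)

theorem Polynomial.Separable.exists_dvd_expand_sub_X {f : k[X]} (hf : f.Separable) (n : ℕ) :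
    ∃ P : k[X], f ∣ expand k (p ^ n) P - X := by
  induction f using UniqueFactorizationMonoid.induction_on_prime with
  | h₁ => exact absurd hf not_separable_zero
  | h₂ u hu => exact ⟨0, hu.dvd⟩
  | h₃ b q _ hq ih =>
    have hcop : IsCoprime q b := (hq.irreducible.coprime_iff_not_dvd).mpr fun ⟨c, hc⟩ =>
      hq.not_isUnit (hf.squarefree q ⟨c, by rw [hc]; ring⟩)
    obtain ⟨P, hP⟩ := hq.irreducible.exists_dvd_expand_sub_X p hf.of_mul_left n
    obtain ⟨Q, hQ⟩ := ih hf.of_mul_right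
    exact hcop.exists_dvd_expand_sub_X_mul p hP hQ

end Frobenius

section Separable

variable {k : Type*} [Field k]

instance Algebra.IsSeparable.pi {ι : Type*} [Finite ι] (L : ι → Type*) [∀ i, Field (L i)]
    [∀ i, Algebra k (L i)] [∀ i, Algebra.IsSeparable k (L i)] :
    Algebra.IsSeparable k (∀ i, L i) := by
  classical
  have := Fintype.ofFinite ι
  refine ⟨fun x => ?_⟩
  have hint (i : ι) : IsIntegral k (x i) := Algebra.IsSeparable.isIntegral k (x i)
  set S := Finset.univ.image fun i => minpoly k (x i)
  have hcop : ∀ f ∈ S, ∀ g ∈ S, f ≠ g → IsCoprime f g := by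
    intro f hf g hg hne
    obtain ⟨i, -, rfl⟩ := Finset.mem_image.mp hf
    obtain ⟨j, -, rfl⟩ := Finset.mem_image.mp hg
    refine (minpoly.irreducible (hint i)).coprime_iff_not_dvd.mpr fun hdvd => hne ?_
    refine (minpoly.eq_of_irreducible_of_monic (minpoly.irreducible (hint j)) ?_
      (minpoly.monic (hint j))).symm
    obtain ⟨c, hc⟩ := hdvd
    rw [hc, map_mul, minpoly.aeval, zero_mul]
  have hann : aeval x (∏ f ∈ S, f) = 0 := by
    funext i
    change Pi.evalAlgHom k L i (aeval x (∏ f ∈ S, f)) = 0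
    rw [← aeval_algHom_apply, map_prod]
    exact Finset.prod_eq_zero (Finset.mem_image_of_mem _ (Finset.mem_univ i)) (minpoly.aeval k _)
  have hsep : (∏ f ∈ S, f).Separable := separable_prod' hcop fun f hf => by
    obtain ⟨i, -, rfl⟩ := Finset.mem_image.mp hf
    exact Algebra.IsSeparable.isSeparable k (x i)
  exact hsep.of_dvd (minpoly.dvd k x hann)

theorem Algebra.IsSeparable.of_etale (A : Type u) [CommRing A] [Algebra k A] [Algebra.Etale k A] :
    Algebra.IsSeparable k A := by
  obtain ⟨I, _, L, _, _, e, hL⟩ := (Algebra.Etale.iff_exists_algEquiv_prod k A).mp ‹_›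
  have (i : I) := (hL i).2
  refine ⟨fun a => ?_⟩
  rw [IsSeparable, ← minpoly.algEquiv_eq e a]
  exact Algebra.IsSeparable.isSeparable k (e a)

end Separable

section PurelyInseparableBaseChange

variable (k k' : Type*) [Field k] [Field k'] [Algebra k k'] [IsPurelyInseparable k k']
  {B : Type*} [CommRing B] [Algebra k B]

theorem exists_pow_expChar_pow_mem_range_includeRight (p : ℕ) [ExpChar k p] (x : k' ⊗[k] B) :
    ∃ n : ℕ, x ^ p ^ n ∈ (includeRight : B →ₐ[k] k' ⊗[k] B).range := by
  rcases subsingleton_or_nontrivial (k' ⊗[k] B) with _ | _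
  · exact ⟨0, 0, Subsingleton.elim _ _⟩
  have : ExpChar (k' ⊗[k] B) p := expChar_of_injective_algebraMap (algebraMap k _).injective p
  induction x using TensorProduct.induction_on with
  | zero => exact ⟨0, 0, by simp⟩
  | tmul c b =>
    obtain ⟨n, d, hd⟩ := IsPurelyInseparable.pow_mem k p c
    refine ⟨n, d • b ^ p ^ n, ?_⟩
    change (1 : k') ⊗ₜ[k] (d • b ^ p ^ n) = (c ⊗ₜ[k] b) ^ p ^ n
    rw [tmul_pow, TensorProduct.tmul_smul, TensorProduct.smul_tmul',
      ← Algebra.algebraMap_eq_smul_one, hd]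
  | add x y hx hy =>
    obtain ⟨m, hm⟩ := hx
    obtain ⟨n, hn⟩ := hy
    refine ⟨m + n, ?_⟩
    rw [add_pow_expChar_pow, pow_add, pow_mul, mul_comm (p ^ m), pow_mul]
    exact add_mem (pow_mem hm _) (pow_mem hn _)

theorem mem_range_includeRight_of_aeval_eq_zero {x : k' ⊗[k] B} {f : k[X]} (hf : f.Separable)
    (hx : aeval x f = 0) : x ∈ (includeRight : B →ₐ[k] k' ⊗[k] B).range := by
  obtain ⟨p, _⟩ := ExpChar.exists k
  obtain ⟨n, b, hb⟩ := exists_pow_expChar_pow_mem_range_includeRight k k' p x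
  obtain ⟨P, Q, hPQ⟩ := hf.exists_dvd_expand_sub_X p n
  have hxP : aeval (x ^ p ^ n) P = x := by
    have := congrArg (aeval x) hPQ
    rwa [map_mul, hx, zero_mul, map_sub, expand_aeval, aeval_X, sub_eq_zero] at this
  refine ⟨aeval b P, ?_⟩
  rw [← hxP, ← hb]
  exact (aeval_algHom_apply includeRight b P).symm

end PurelyInseparableBaseChange

section SeparableClosure

variable (k k' L : Type*) [Field k] [Field k'] [Field L] [Algebra k k'] [Algebra k' L]
  [Algebra k L] [IsScalarTower k k' L] [IsPurelyInseparable k k'] [Algebra.IsSeparable k' L]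

theorem finite_separableClosure_of_isPurelyInseparable [Module.Finite k' L] :
    Module.Finite k (separableClosure k L) := by
  rw [← Module.rank_lt_aleph0_iff, ← Field.sepDegree,
    Field.sepDegree_eq_of_isPurelyInseparable_of_isSeparable k k' L]
  exact Module.rank_lt_aleph0 k' L

theorem bijective_lift_separableClosure [Module.Finite k' L] :
    Function.Bijective
      (lift (Algebra.ofId k' L) (separableClosure k L).val fun _ _ => .all _ _) := by
  have : Module.Finite k (separableClosure k L) :=
    finite_separableClosure_of_isPurelyInseparable k k' L
  set ψ := lift (Algebra.ofId k' L) (separableClosure k L).val fun _ _ => .all _ _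
  have hsurj : Function.Surjective ψ := by
    rw [← AlgHom.range_eq_top, eq_top_iff, ← IntermediateField.top_toSubalgebra,
      ← separableClosure.adjoin_eq_of_isAlgebraic_of_isSeparable (F := k) L,
      adjoin_toSubalgebra_of_isAlgebraic fun x _ => Algebra.IsAlgebraic.isAlgebraic x]
    exact Algebra.adjoin_le fun s hs => ⟨1 ⊗ₜ ⟨s, hs⟩, by simp [ψ]⟩
  refine ⟨(LinearMap.injective_iff_surjective_of_finrank_eq_finrank ?_).mpr hsurj, hsurj⟩
  rw [Module.finrank_baseChange, Module.finrank, Module.finrank, ← Field.sepDegree,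
    Field.sepDegree_eq_of_isPurelyInseparable_of_isSeparable k k' L]

end SeparableClosure

theorem AlgHom.exists_comp_eq_of_forall_mem_range {R A B C : Type*} [CommSemiring R]
    [Semiring A] [Semiring B] [Semiring C] [Algebra R A] [Algebra R B] [Algebra R C]
    {i : B →ₐ[R] C} (hi : Function.Injective i) {h : A →ₐ[R] C} (hh : ∀ a, h a ∈ i.range) :
    ∃ f : A →ₐ[R] B, i.comp f = h :=
  ⟨(AlgEquiv.ofInjective i hi).symm.toAlgHom.comp (h.codRestrict _ hh), AlgHom.ext fun a =>
    congrArg Subtype.val ((AlgEquiv.ofInjective i hi).apply_symm_apply (h.codRestrict _ hh a))⟩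

def FiniteEtaleAlg.isoMk {k : Type u} [Field k] {A B : FiniteEtaleAlg k}
    (e : A.carrier ≃ₐ[k] B.carrier) : A ≅ B where
  hom := e.toAlgHom
  inv := e.symm.toAlgHom
  hom_inv_id := AlgHom.ext e.symm_apply_apply
  inv_hom_id := AlgHom.ext e.apply_symm_apply

section BaseChangeFunctor

variable (k k' : Type u) [Field k] [Field k'] [Algebra k k']

theorem baseChangeFunctor_faithful : (baseChangeFunctor k k').Faithful where
  map_injective {A B} f g hfg := AlgHom.ext fun a =>
    includeRight_injective (algebraMap k k').injective <| by
      have := DFunLike.congr_fun (show map (AlgHom.id k' k') f = map (AlgHom.id k' k') g from hfg)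
        (1 ⊗ₜ a)
      rwa [map_tmul, map_tmul] at this

variable [IsPurelyInseparable k k']

theorem baseChangeFunctor_full : (baseChangeFunctor k k').Full where
  map_surjective {A B} g := by
    let g' : k' ⊗[k] A.carrier →ₐ[k'] k' ⊗[k] B.carrier := g
    have := Algebra.IsSeparable.of_etale (k := k) A.carrier
    obtain ⟨f, hf⟩ := AlgHom.exists_comp_eq_of_forall_mem_range
      (includeRight_injective (algebraMap k k').injective)
      (h := (g'.restrictScalars k).comp includeRight) fun a =>
        mem_range_includeRight_of_aeval_eq_zero k k' (Algebra.IsSeparable.isSeparable k a) <| by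
          rw [aeval_algHom_apply, minpoly.aeval, map_zero]
    refine ⟨f, show map (AlgHom.id k' k') f = g' from ?_⟩
    exact Algebra.TensorProduct.ext (Subsingleton.elim _ _) hf

theorem baseChangeFunctor_essSurj : (baseChangeFunctor k k').EssSurj where
  mem_essImage Y := by
    obtain ⟨I, _, L, _, _, e, hL⟩ :=
      (Algebra.Etale.iff_exists_algEquiv_prod k' Y.carrier).mp inferInstance
    have (i : I) := (hL i).1
    have (i : I) := (hL i).2
    let (i : I) : Algebra k (L i) := Algebra.compHom (L i) (algebraMap k k')
    have (i : I) : IsScalarTower k k' (L i) := IsScalarTower.of_algebraMap_eq' rfl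
    have (i : I) := finite_separableClosure_of_isPurelyInseparable k k' (L i)
    classical
    have := Fintype.ofFinite I
    let B : FiniteEtaleAlg k :=
      { carrier := ∀ i, separableClosure k (L i)
        isEtale := (Algebra.Etale.iff_exists_algEquiv_prod k _).mpr
          ⟨I, inferInstance, _, _, _, AlgEquiv.refl, fun i => ⟨inferInstance, inferInstance⟩⟩ }
    exact ⟨B, ⟨FiniteEtaleAlg.isoMk <| (piRight k k' k' _).trans <|
      (AlgEquiv.piCongrRight fun i =>
        AlgEquiv.ofBijective _ (bijective_lift_separableClosure k k' (L i))).trans e.symm⟩⟩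

end BaseChangeFunctor

theorem baseChangeFunctor_isEquivalence_of_purelyInseparable_general
    (k k' : Type u) [Field k] [Field k'] [Algebra k k']
    [IsPurelyInseparable k k'] :
    (baseChangeFunctor k k').IsEquivalence :=
  { faithful := baseChangeFunctor_faithful k k'
    full := baseChangeFunctor_full k k'
    essSurj := baseChangeFunctor_essSurj k k' }

/-- Let `k` be a field of characteristic `p > 0` and `k'` a purely
inseparable field extension of `k`.  Then the base-change functor `A ↦ A ⊗_k k'` from the
category of finite étale `k`-algebras to the category of finite étale `k'`-algebras is an
equivalence of categories. -/
theorem baseChangeFunctor_isEquivalence_of_purelyInseparable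
    (p : ℕ) [Fact p.Prime] (k k' : Type u) [Field k] [Field k'] [Algebra k k']
    [CharP k p] [IsPurelyInseparable k k'] :
    (baseChangeFunctor k k').IsEquivalence :=
  baseChangeFunctor_isEquivalence_of_purelyInseparable_general k k'
end

section
/- Let k be a field of characteristic p > 0 with algebraic closure k^alg, let l ⊆ k^alg be a finite Galois extension of k, let n ≥ 0 be an integer, put k_n = {x ∈ k^alg : x^{p^n} ∈ k} and let l_n be the compositum of k_n and l in k^alg. Then: (a) the map δ : l_n → l, x ↦ x^{p^n}, is a well-defined field isomorphism onto l carrying k_n onto k (in particular the compositum of k and l^{p^n} equals l); (b) l_n is finite Galois over k_n and δ induces a group isomorphism ψ : Gal(l/k) → Gal(l_n/k_n), ψ(σ) = δ^{-1} ∘ σ ∘ δ; and (c) the composite of ψ with the restriction isomorphism ρ : Gal(l_n/k_n) → Gal(l/k), τ ↦ τ|_l, is the identity map of Gal(l/k). -/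
noncomputable section

variable (p n : ℕ) [Fact p.Prime] (k kalg : Type*) [Field k] [Field kalg]
  [Algebra k kalg] [CharP k p] [CharP kalg p]

/-- The intermediate field `k^{p^{-n}} = {x ∈ kalg : x^{p^n} ∈ k}` of `kalg / k`. -/
def pRoots : IntermediateField k kalg :=
  Subfield.toIntermediateField
    (((algebraMap k kalg).fieldRange).comap (iterateFrobenius kalg p n))
    (fun x => by
      rw [Subfield.mem_comap]
      exact RingHom.mem_fieldRange.mpr ⟨x ^ p ^ n, by rw [map_pow, iterateFrobenius_def]⟩)

variable (l : IntermediateField k kalg)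

/-- The compositum `l_n = k^{p^{-n}} · l`, viewed as an extension of `k_n = k^{p^{-n}}`. -/
def composLn : IntermediateField (pRoots p n k kalg) kalg :=
  IntermediateField.extendScalars
    (le_sup_left : pRoots p n k kalg ≤ pRoots p n k kalg ⊔ l)

/-! Since `kalg` is perfect, `φ : x ↦ x ^ p ^ n` is an automorphism of `kalg`. It maps `k_n` onto
`k` and `l` onto `l^{p^n}`, and `k(l^{p^n}) = l` because `l` is both separable and purely
inseparable over `k(l^{p^n})`. Hence `φ` maps `l_n = k_n ⊔ l` onto `l`, which gives `δ`, and
conjugation by `δ` transports `Gal(l/k)` to `Gal(l_n/k_n)`. As `σ ∈ Gal(l/k)` commutes with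
`φ` and `φ` is injective, `δ⁻¹ σ δ` agrees with `σ` on `l`, so `ψ` inverts restriction.
Finally `l_n/k_n` is Galois since it is the splitting field over `k_n` of a separable polynomial
with splitting field `l` over `k`. -/

open IntermediateField Polynomial

theorem IntermediateField.fieldRange_sup_map_iterateFrobenius {F E : Type*} [Field F] [Field E]
    [Algebra F E] (q n : ℕ) [ExpChar E q] (L : IntermediateField F E) [Algebra.IsSeparable F L] :
    (algebraMap F E).fieldRange ⊔ L.toSubfield.map (iterateFrobenius E q n) = L.toSubfield := by
  have : ExpChar F q := (algebraMap F E).expChar (algebraMap F E).injective q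
  have : Algebra.IsSeparable F (adjoin F (L : Set E)) := by rwa [adjoin_self]
  have h := congrArg toSubfield
    (adjoin_eq_adjoin_pow_expChar_pow_of_isSeparable F E (L : Set E) q n)
  rw [adjoin_self] at h
  conv_rhs => rw [h, adjoin_toSubfield, Subfield.closure_union, ← RingHom.coe_fieldRange,
    Subfield.closure_eq]
  rw [← Subfield.closure_eq (L.toSubfield.map _), Subfield.coe_map]
  rfl

theorem IntermediateField.isSplittingField_extendScalars_sup {F E : Type*} [Field F] [Field E]
    [Algebra F E] (K L : IntermediateField F E) (P : F[X]) [hP : P.IsSplittingField F L] :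
    (P.map (algebraMap F K)).IsSplittingField K (extendScalars (le_sup_left : K ≤ K ⊔ L)) := by
  classical
  obtain ⟨hsplit, hL⟩ := isSplittingField_iff.mp hP
  have hmap : (P.map (algebraMap F K)).map (algebraMap K E) = P.map (algebraMap F E) := by
    rw [Polynomial.map_map, ← IsScalarTower.algebraMap_eq]
  have hroots : (P.map (algebraMap F K)).rootSet E = P.rootSet E := by
    rw [rootSet_def, rootSet_def, aroots_def, aroots_def, hmap]
  have heq : extendScalars (le_sup_left : K ≤ K ⊔ L) =
      adjoin K ((P.map (algebraMap F K)).rootSet E) := by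
    apply restrictScalars_injective F
    rw [extendScalars_restrictScalars, restrictScalars_adjoin_eq_sup, hroots, ← hL]
  rw [heq]
  apply adjoin_rootSet_isSplittingField
  rw [hmap, IsScalarTower.algebraMap_eq F L E, ← Polynomial.map_map]
  exact hsplit.map _

theorem IntermediateField.mem_range_algebraMap_iff {F E : Type*} [Field F] [Field E]
    [Algebra F E] {L : IntermediateField F E} (x : L) :
    x ∈ Set.range (algebraMap F L) ↔ (x : E) ∈ Set.range (algebraMap F E) :=
  ⟨fun ⟨a, ha⟩ => ⟨a, congrArg Subtype.val ha⟩, fun ⟨a, ha⟩ => ⟨a, Subtype.ext ha⟩⟩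

section AutCongr

variable {R S A B : Type*} [CommSemiring R] [CommSemiring S] [Semiring A] [Semiring B]
  [Algebra R A] [Algebra S B]

def AlgEquiv.conjRingEquiv (σ : A ≃ₐ[R] A) (e : A ≃+* B)
    (he : ∀ b ∈ Set.range (algebraMap S B), e.symm b ∈ Set.range (algebraMap R A)) :
    B ≃ₐ[S] B :=
  AlgEquiv.ofRingEquiv (f := e.symm.trans (σ.toRingEquiv.trans e)) fun s => by
    obtain ⟨r, hr⟩ := he _ ⟨s, rfl⟩
    change e (σ (e.symm _)) = _
    rw [← hr, σ.commutes, hr, e.apply_symm_apply]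

@[simp]
theorem AlgEquiv.conjRingEquiv_apply (σ : A ≃ₐ[R] A) (e : A ≃+* B)
    (he : ∀ b ∈ Set.range (algebraMap S B), e.symm b ∈ Set.range (algebraMap R A)) (b : B) :
    σ.conjRingEquiv e he b = e (σ (e.symm b)) := rfl

def RingEquiv.algAutCongr (e : A ≃+* B)
    (he : ∀ a, a ∈ Set.range (algebraMap R A) ↔ e a ∈ Set.range (algebraMap S B)) :
    (A ≃ₐ[R] A) ≃* (B ≃ₐ[S] B) where
  toFun σ := σ.conjRingEquiv e fun b hb => (he _).2 (by simpa using hb)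
  invFun τ := τ.conjRingEquiv e.symm fun a ha => by simpa using (he a).1 ha
  left_inv σ := by ext; simp
  right_inv τ := by ext; simp
  map_mul' σ σ' := by ext; simp

theorem RingEquiv.algAutCongr_symm_apply (e : A ≃+* B)
    (he : ∀ a, a ∈ Set.range (algebraMap R A) ↔ e a ∈ Set.range (algebraMap S B))
    (τ : B ≃ₐ[S] B) (a : A) :
    (e.algAutCongr he).symm τ a = e.symm (τ (e a)) := rfl

end AutCongr

section Frobenius

variable {p n : ℕ} [Fact p.Prime] {k kalg : Type*} [Field k] [Field kalg] [Algebra k kalg]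
  [CharP kalg p] {l : IntermediateField k kalg}

theorem map_iterateFrobenius_pRoots [PerfectRing kalg p] :
    (pRoots p n k kalg).toSubfield.map (iterateFrobenius kalg p n) =
      (algebraMap k kalg).fieldRange :=
  Subfield.map_comap_eq_self_of_surjective (iterateFrobeniusEquiv kalg p n).surjective _

theorem mem_composLn_iff [PerfectRing kalg p] [Algebra.IsSeparable k l] {x : kalg} :
    x ∈ composLn p n k kalg l ↔ x ^ p ^ n ∈ l := by
  have hmap :
      (pRoots p n k kalg ⊔ l).toSubfield.map (iterateFrobenius kalg p n) = l.toSubfield := by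
    rw [sup_toSubfield, Subfield.map_sup, map_iterateFrobenius_pRoots,
      fieldRange_sup_map_iterateFrobenius]
  rw [composLn, mem_extendScalars, ← mem_toSubfield, ← SetLike.mem_coe,
    ← (iterateFrobenius_inj kalg p n).mem_set_image, ← Subfield.coe_map, hmap]
  rfl

variable [PerfectRing kalg p] [Algebra.IsSeparable k l]

variable (p n k kalg l) in
def composLnFrobeniusEquiv : composLn p n k kalg l ≃+* l :=
  (iterateFrobeniusEquiv kalg p n).restrict (composLn p n k kalg l) l fun _ => mem_composLn_iff

@[simp]
theorem coe_composLnFrobeniusEquiv (x : composLn p n k kalg l) :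
    (composLnFrobeniusEquiv p n k kalg l x : kalg) = (x : kalg) ^ p ^ n :=
  rfl

theorem mem_range_algebraMap_iff_composLnFrobeniusEquiv (x : composLn p n k kalg l) :
    x ∈ Set.range (algebraMap (pRoots p n k kalg) (composLn p n k kalg l)) ↔
      composLnFrobeniusEquiv p n k kalg l x ∈ Set.range (algebraMap k l) := by
  rw [mem_range_algebraMap_iff, mem_range_algebraMap_iff, coe_composLnFrobeniusEquiv]
  exact ⟨fun ⟨c, hc⟩ => hc ▸ c.2, fun h => ⟨⟨x, h⟩, rfl⟩⟩

variable (p n k kalg l) in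
def composLnGaloisEquiv :
    (l ≃ₐ[k] l) ≃* (composLn p n k kalg l ≃ₐ[pRoots p n k kalg] composLn p n k kalg l) :=
  ((composLnFrobeniusEquiv p n k kalg l).algAutCongr
    mem_range_algebraMap_iff_composLnFrobeniusEquiv).symm

theorem composLnFrobeniusEquiv_composLnGaloisEquiv_apply (σ : l ≃ₐ[k] l)
    (x : composLn p n k kalg l) :
    composLnFrobeniusEquiv p n k kalg l (composLnGaloisEquiv p n k kalg l σ x) =
      σ (composLnFrobeniusEquiv p n k kalg l x) := by
  simp [composLnGaloisEquiv, RingEquiv.algAutCongr_symm_apply]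

theorem coe_composLnGaloisEquiv_apply (σ : l ≃ₐ[k] l) (x : l)
    (hx : (x : kalg) ∈ composLn p n k kalg l) :
    (composLnGaloisEquiv p n k kalg l σ ⟨x, hx⟩ : kalg) = σ x := by
  apply iterateFrobenius_inj kalg p n
  rw [iterateFrobenius_def, iterateFrobenius_def, ← coe_composLnFrobeniusEquiv,
    composLnFrobeniusEquiv_composLnGaloisEquiv_apply,
    show composLnFrobeniusEquiv p n k kalg l ⟨x, hx⟩ = x ^ p ^ n from rfl, map_pow]
  rfl

end Frobenius

/-- Let `k` be a field of characteristic `p > 0` with algebraic closure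
`kalg`, let `l ⊆ kalg` be a finite Galois extension of `k`, let `n ≥ 0`, put
`k_n = {x ∈ kalg : x^{p^n} ∈ k}` and let `l_n` be the compositum of `k_n` and `l` in
`kalg`.  Then: (a) the map `δ : l_n → l`, `x ↦ x^{p^n}`, is a well-defined field
isomorphism onto `l` carrying `k_n` onto `k` (in particular the compositum of `k` and
`l^{p^n}` equals `l`); (b) `l_n` is finite Galois over `k_n` and `δ` induces a group
isomorphism `ψ : Gal(l/k) → Gal(l_n/k_n)`, `ψ(σ) = δ⁻¹ ∘ σ ∘ δ`; and (c) the composite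
of `ψ` with the restriction isomorphism `ρ : Gal(l_n/k_n) → Gal(l/k)`, `τ ↦ τ|_l`, is the
identity of `Gal(l/k)`. -/
theorem pow_p_n_conjugation_of_galoisGroup_is_inverse_of_restriction
    [IsAlgClosure k kalg] [FiniteDimensional k ↥l] [IsGalois k ↥l] :
    ∃ δ : ↥(composLn p n k kalg l) ≃+* ↥l,
      (∀ x : ↥(composLn p n k kalg l), ((δ x : ↥l) : kalg) = (x : kalg) ^ p ^ n) ∧
      (∀ x : ↥(composLn p n k kalg l),
        (x : kalg) ∈ pRoots p n k kalg ↔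
          ((δ x : ↥l) : kalg) ∈ (algebraMap k kalg).fieldRange) ∧
      ((algebraMap k kalg).fieldRange ⊔
          Subfield.map (iterateFrobenius kalg p n) l.toSubfield = l.toSubfield) ∧
      FiniteDimensional ↥(pRoots p n k kalg) ↥(composLn p n k kalg l) ∧
      IsGalois ↥(pRoots p n k kalg) ↥(composLn p n k kalg l) ∧
      ∃ ψ : (↥l ≃ₐ[k] ↥l) ≃*
          (↥(composLn p n k kalg l) ≃ₐ[↥(pRoots p n k kalg)] ↥(composLn p n k kalg l)),
        (∀ (σ : ↥l ≃ₐ[k] ↥l) (x : ↥(composLn p n k kalg l)),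
          δ ((ψ σ) x) = σ (δ x)) ∧
        ∃ ρ : (↥(composLn p n k kalg l) ≃ₐ[↥(pRoots p n k kalg)]
                ↥(composLn p n k kalg l)) ≃* (↥l ≃ₐ[k] ↥l),
          (∀ (τ : ↥(composLn p n k kalg l) ≃ₐ[↥(pRoots p n k kalg)]
                ↥(composLn p n k kalg l))
            (x : ↥l) (hx : (x : kalg) ∈ composLn p n k kalg l),
            (((ρ τ) x : ↥l) : kalg) =
              ((τ ⟨(x : kalg), hx⟩ : ↥(composLn p n k kalg l)) : kalg)) ∧
          (∀ σ : ↥l ≃ₐ[k] ↥l, ρ (ψ σ) = σ) := by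
  have : IsAlgClosed kalg := IsAlgClosure.isAlgClosed k
  obtain ⟨P, hsep, _⟩ := IsGalois.is_separable_splitting_field k l
  let Q := P.map (algebraMap k (pRoots p n k kalg))
  have : Q.IsSplittingField (pRoots p n k kalg) (composLn p n k kalg l) :=
    isSplittingField_extendScalars_sup _ l P
  let ψ := composLnGaloisEquiv p n k kalg l
  refine ⟨composLnFrobeniusEquiv p n k kalg l, fun _ => rfl, fun _ => Iff.rfl,
    fieldRange_sup_map_iterateFrobenius p n l, IsSplittingField.finiteDimensional _ Q,
    IsGalois.of_separable_splitting_field (p := Q) hsep.map, ψ,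
    composLnFrobeniusEquiv_composLnGaloisEquiv_apply, ψ.symm, fun τ x hx => ?_,
    ψ.symm_apply_apply⟩
  conv_rhs => rw [← ψ.apply_symm_apply τ]
  exact (coe_composLnGaloisEquiv_apply _ x hx).symm
end
end
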